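/- In a k-player alternating move game, the 'Folk Theorem' profile is a Nash equilibrium: let ν_i be the zero-sum value for player i (against the coalition of all others), σ_i an optimal strategy for player i in that zero-sum game, and σ̄_i an optimal coalition punishment strategy holding player i to at most ν_i. The profile where each player i plays σ_i, and upon the first deviation by some player j switches permanently to σ̄_j, is a Nash equilibrium in which each player i receives utility at least ν_i. -/

import Mathlib

open Filter Finset

/-- A `k`-player alternating move game modeled on a finite graph: `V` are states, `A` actions,
`owner v` is the player to move at `v`, `mov v a` the next state, `w u v` the vector of
utilities of the move from `u` to `v`, `v0` the initial state. -/
structure AltGame (k : ℕ) where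
  V : Type
  A : Type
  owner : V → Fin k
  mov : V → A → V
  w : V → V → Fin k → ℝ
  v0 : V

namespace AltGame

variable {k : ℕ} (G : AltGame k)

/-- A pure strategy profile: each player maps the history of actions to a next action. -/
abbrev PStrat := Fin k → List G.A → G.A

/-- The trajectory (current state, history of actions) induced by a pure profile. -/
def traj (σ : G.PStrat) : ℕ → G.V × List G.A
  | 0 => (G.v0, [])
  | n + 1 =>
    let x := traj σ n
    (G.mov x.1 (σ (G.owner x.1) x.2), x.2 ++ [σ (G.owner x.1) x.2])

/-- The state at round `n` under a pure profile. -/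
def state (σ : G.PStrat) (n : ℕ) : G.V := (G.traj σ n).1

/-- The (liminf of average) utility of player `i` under a pure profile. -/
noncomputable def putil (i : Fin k) (σ : G.PStrat) : ℝ :=
  liminf (fun n : ℕ =>
    (∑ t ∈ Finset.range n, G.w (G.state σ t) (G.state σ (t + 1)) i) / n) atTop

/-- A pure profile is a Nash equilibrium if no unilateral deviation improves a player. -/
def PNash (σ : G.PStrat) : Prop :=
  ∀ (i : Fin k) (τ : List G.A → G.A),
    G.putil i (Function.update σ i τ) ≤ G.putil i σ

end AltGame

/-!
For each player `i`, the zero-sum game "player `i` against the coalition of the others" has a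
positional value. The normalized values of the discounted games are the fixed points of a
contracting Bellman operator; letting the discount tend to `1` along an ultrafilter yields a
potential `μ i` and one positional strategy `σ i`, optimal for both sides from every state. The
discounted Bellman inequalities telescope, up to an error that vanishes after division by the
length of the play, to the bounds on mean payoffs.

In the folk profile the owner `j` of each state plays `σ j` until some player `i` is the first to
leave this path; from then on everybody plays `σ i`. A deviation by `i` gains nothing: the
deviating move cannot raise `μ i`, the punishment keeps `i` at the value `μ i` of the state
reached, the path secures `μ i` of each of its states, and a finite prefix does not change a
liminf of averages. Finally `ν i` is at most what `i` gets by switching to his guaranteeing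
strategy, which the equilibrium property bounds by his equilibrium payoff.
-/

open Topology

section RunningAverage

noncomputable def runningAvg (w : ℕ → ℝ) (n : ℕ) : ℝ := (∑ t ∈ range n, w t) / n

variable {w : ℕ → ℝ} {M : ℝ}

lemma abs_sum_range_le (hw : ∀ t, |w t| ≤ M) (n : ℕ) : |∑ t ∈ range n, w t| ≤ n * M :=
  calc |∑ t ∈ range n, w t| ≤ ∑ t ∈ range n, |w t| := abs_sum_le_sum_abs _ _
    _ ≤ ∑ _t ∈ range n, M := sum_le_sum fun t _ => hw t
    _ = n * M := by rw [sum_const, card_range, nsmul_eq_mul]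

lemma abs_runningAvg_le (hw : ∀ t, |w t| ≤ M) (n : ℕ) : |runningAvg w n| ≤ M := by
  rcases n.eq_zero_or_pos with rfl | hn
  · simpa [runningAvg] using (abs_nonneg _).trans (hw 0)
  · have hn : (0 : ℝ) < n := by exact_mod_cast hn
    rw [runningAvg, abs_div, Nat.abs_cast, div_le_iff₀ hn, mul_comm]
    exact abs_sum_range_le hw n

lemma isBoundedUnder_runningAvg (hw : ∀ t, |w t| ≤ M) :
    IsBoundedUnder (· ≤ ·) atTop (runningAvg w) ∧ IsBoundedUnder (· ≥ ·) atTop (runningAvg w) :=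
  isBoundedUnder_le_abs.mp (isBoundedUnder_of ⟨M, abs_runningAvg_le hw⟩)

lemma le_liminf_runningAvg {c : ℝ} (hw : ∀ t, |w t| ≤ M)
    (h : ∀ ε > 0, ∃ K, ∀ n : ℕ, n * (c - ε) - K ≤ ∑ t ∈ range n, w t) :
    c ≤ liminf (runningAvg w) atTop := by
  refine le_of_forall_pos_le_add fun ε hε => ?_
  obtain ⟨K, hK⟩ := h (ε / 2) (half_pos hε)
  have hev : ∀ᶠ n : ℕ in atTop, c - ε ≤ runningAvg w n := by
    filter_upwards [eventually_gt_atTop 0,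
      (tendsto_const_div_atTop_nhds_zero_nat K).eventually (gt_mem_nhds (half_pos hε))]
      with n hn hKn
    have hn : (0 : ℝ) < n := by exact_mod_cast hn
    rw [runningAvg, le_div_iff₀ hn]
    linarith [hK n, (div_lt_iff₀ hn).mp hKn]
  linarith [le_liminf_of_le (isBoundedUnder_runningAvg hw).1.isCoboundedUnder_ge hev]

lemma liminf_runningAvg_le {c : ℝ} (hw : ∀ t, |w t| ≤ M)
    (h : ∀ ε > 0, ∃ K, ∀ n : ℕ, ∑ t ∈ range n, w t ≤ n * (c + ε) + K) :
    liminf (runningAvg w) atTop ≤ c := by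
  refine le_of_forall_pos_le_add fun ε hε => ?_
  obtain ⟨K, hK⟩ := h (ε / 2) (half_pos hε)
  have hev : ∀ᶠ n : ℕ in atTop, runningAvg w n ≤ c + ε := by
    filter_upwards [eventually_gt_atTop 0,
      (tendsto_const_div_atTop_nhds_zero_nat K).eventually (gt_mem_nhds (half_pos hε))]
      with n hn hKn
    have hn : (0 : ℝ) < n := by exact_mod_cast hn
    rw [runningAvg, div_le_iff₀ hn]
    linarith [hK n, (div_lt_iff₀ hn).mp hKn]
  obtain ⟨hle, hge⟩ := isBoundedUnder_runningAvg hw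
  exact (liminf_le_limsup hle hge).trans (limsup_le_of_le hge.isCoboundedUnder_le hev)

lemma tendsto_runningAvg_sub_runningAvg_comp_add (hw : ∀ t, |w t| ≤ M) (N : ℕ) :
    Tendsto (runningAvg w - runningAvg fun t => w (N + t)) atTop (𝓝 0) := by
  refine squeeze_zero_norm (fun n => ?_) (tendsto_const_div_atTop_nhds_zero_nat (2 * N * M))
  have hsplit : ∑ t ∈ range n, w t - ∑ t ∈ range n, w (N + t)
      = ∑ t ∈ range N, w t - ∑ t ∈ range N, w (n + t) := by
    have h1 := sum_range_add w N n
    have h2 := sum_range_add w n N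
    rw [add_comm N n] at h1
    linarith
  rw [Real.norm_eq_abs, Pi.sub_apply, runningAvg, runningAvg, ← sub_div, hsplit, abs_div,
    Nat.abs_cast]
  gcongr
  calc |∑ t ∈ range N, w t - ∑ t ∈ range N, w (n + t)|
      ≤ |∑ t ∈ range N, w t| + |∑ t ∈ range N, w (n + t)| := abs_sub _ _
    _ ≤ N * M + N * M := add_le_add (abs_sum_range_le hw N) (abs_sum_range_le (fun t => hw _) N)
    _ = 2 * N * M := by ring

lemma liminf_le_liminf_of_tendsto_sub {ι : Type*} {f : Filter ι} [f.NeBot] {u v : ι → ℝ}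
    (hv : IsBoundedUnder (· ≤ ·) f v ∧ IsBoundedUnder (· ≥ ·) f v)
    (h : Tendsto (u - v) f (𝓝 0)) : liminf u f ≤ liminf v f := by
  have key := liminf_add_le h.isBoundedUnder_ge h.isBoundedUnder_le hv.2 hv.1.isCoboundedUnder_ge
  rwa [sub_add_cancel, h.limsup_eq, zero_add] at key

lemma liminf_runningAvg_comp_add (hw : ∀ t, |w t| ≤ M) (N : ℕ) :
    liminf (runningAvg fun t => w (N + t)) atTop = liminf (runningAvg w) atTop := by
  have h := tendsto_runningAvg_sub_runningAvg_comp_add hw N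
  refine le_antisymm (liminf_le_liminf_of_tendsto_sub (isBoundedUnder_runningAvg hw) ?_)
    (liminf_le_liminf_of_tendsto_sub (isBoundedUnder_runningAvg fun t => hw (N + t)) h)
  simpa [Pi.sub_def] using h.neg

end RunningAverage

lemma le_sum_of_discounted {w y : ℕ → ℝ} {c d B : ℝ} (hd0 : 0 ≤ d) (hd1 : d < 1)
    (hB : ∀ t, |y t| ≤ B) (hc : ∀ t, c ≤ y t)
    (hy : ∀ t, y t ≤ (1 - d) * w t + d * y (t + 1)) (n : ℕ) :
    n * c - 2 * B / (1 - d) ≤ ∑ t ∈ range n, w t := by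
  have hd : 0 < 1 - d := sub_pos.mpr hd1
  have htele : ∑ t ∈ range n, (y t - d * y (t + 1))
      = (1 - d) * ∑ t ∈ range n, y t + d * (y 0 - y n) := by
    rw [← sum_range_sub' y n, mul_sum, mul_sum, ← sum_add_distrib]
    exact sum_congr rfl fun t _ => by ring
  have hsum : ∑ t ∈ range n, (y t - d * y (t + 1)) ≤ (1 - d) * ∑ t ∈ range n, w t := by
    rw [mul_sum]
    exact sum_le_sum fun t _ => by linarith [hy t]
  have hyc : n * c ≤ ∑ t ∈ range n, y t := by
    simpa using card_nsmul_le_sum (range n) y c fun t _ => hc t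
  have hends : -(2 * B) ≤ d * (y 0 - y n) := by
    have h0 := abs_le.mp (hB 0)
    have hn := abs_le.mp (hB n)
    nlinarith
  have hK : n * c - 2 * B / (1 - d) = ((1 - d) * (n * c) - 2 * B) / (1 - d) := by
    field_simp
  rw [hK, div_le_iff₀ hd]
  nlinarith

section MeanPayoffGame

variable {V A : Type*} (mov : V → A → V)

noncomputable def meanPayoff (W : V → V → ℝ) (x : ℕ → V) : ℝ :=
  liminf (runningAvg fun t => W (x t) (x (t + 1))) atTop

def FollowsOn (S : V → Prop) (σ : V → A) (x : ℕ → V) : Prop :=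
  ∀ t, ∃ a, (S (x t) → a = σ (x t)) ∧ x (t + 1) = mov (x t) a

lemma abs_apply_le_norm [Fintype V] (W : V → V → ℝ) (u v : V) : |W u v| ≤ ‖W‖ :=
  (norm_le_pi_norm (W u) v).trans (norm_le_pi_norm W u)

lemma meanPayoff_comp_add [Fintype V] (W : V → V → ℝ) (x : ℕ → V) (N : ℕ) :
    meanPayoff W (fun t => x (N + t)) = meanPayoff W x :=
  liminf_runningAvg_comp_add (w := fun t => W (x t) (x (t + 1)))
    (fun _ => abs_apply_le_norm W _ _) N

variable {mov}

lemma FollowsOn.monotone_comp {S : V → Prop} {σ : V → A} {x : ℕ → V} (hx : FollowsOn mov S σ x)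
    {f : V → ℝ} (hf : ∀ v a, (S v → a = σ v) → f v ≤ f (mov v a)) : Monotone (f ∘ x) :=
  monotone_nat_of_le_succ fun t => by
    obtain ⟨a, ha, hxa⟩ := hx t
    simpa [hxa] using hf _ a ha

end MeanPayoffGame

section VanishingDiscount

variable {V A : Type*} (mov : V → A → V) (P : V → Prop) (W : V → V → ℝ)

/-- `g` is the value of the game discounted by `d`, rescaled by `1 - d`, in which the maximizer
moves at the states in `P` and the minimizer elsewhere; `σ` is optimal for both. -/
def IsDiscountedValue (d : ℝ) (g : V → ℝ) (σ : V → A) : Prop :=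
  (∀ v a, (P v → a = σ v) → g v ≤ (1 - d) * W v (mov v a) + d * g (mov v a)) ∧
  (∀ v a, (¬P v → a = σ v) → (1 - d) * W v (mov v a) + d * g (mov v a) ≤ g v)

variable {mov P W} {F : Filter ℕ} {d : ℕ → ℝ} {g : ℕ → V → ℝ} {μ : V → ℝ} {σ : V → A}

lemma tendsto_discounted_step (hd : Tendsto d F (𝓝 1)) {u : V}
    (hg : Tendsto (fun n => g n u) F (𝓝 (μ u))) (r : ℝ) :
    Tendsto (fun n => (1 - d n) * r + d n * g n u) F (𝓝 (μ u)) := by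
  simpa using (((tendsto_const_nhds (x := (1 : ℝ))).sub hd).mul_const r).add (hd.mul hg)

lemma le_apply_mov_of_isDiscountedValue [F.NeBot] (hd : Tendsto d F (𝓝 1))
    (hg : ∀ v, Tendsto (fun n => g n v) F (𝓝 (μ v)))
    (hsol : ∀ᶠ n in F, IsDiscountedValue mov P W (d n) (g n) σ)
    {v : V} {a : A} (ha : P v → a = σ v) : μ v ≤ μ (mov v a) :=
  le_of_tendsto_of_tendsto (hg v) (tendsto_discounted_step hd (hg _) _)
    (hsol.mono fun _ hn => hn.1 v a ha)

lemma apply_mov_le_of_isDiscountedValue [F.NeBot] (hd : Tendsto d F (𝓝 1))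
    (hg : ∀ v, Tendsto (fun n => g n v) F (𝓝 (μ v)))
    (hsol : ∀ᶠ n in F, IsDiscountedValue mov P W (d n) (g n) σ)
    {v : V} {a : A} (ha : ¬P v → a = σ v) : μ (mov v a) ≤ μ v :=
  le_of_tendsto_of_tendsto (tendsto_discounted_step hd (hg _) _) (hg v)
    (hsol.mono fun _ hn => hn.2 v a ha)

lemma exists_isDiscountedValue_near [Finite V] [F.NeBot] (hd : Tendsto d F (𝓝 1))
    (hg : ∀ v, Tendsto (fun n => g n v) F (𝓝 (μ v)))
    (hsol : ∀ᶠ n in F, IsDiscountedValue mov P W (d n) (g n) σ) {ε : ℝ} (hε : 0 < ε) :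
    ∃ n, 0 ≤ d n ∧ IsDiscountedValue mov P W (d n) (g n) σ ∧ ∀ v, |g n v - μ v| < ε := by
  have hnear : ∀ᶠ n in F, ∀ v, |g n v - μ v| < ε :=
    eventually_all.mpr fun v => by simpa [Real.dist_eq] using Metric.tendsto_nhds.mp (hg v) ε hε
  exact ((hd.eventually (lt_mem_nhds zero_lt_one)).and (hsol.and hnear)).exists.imp
    fun _ h => ⟨h.1.le, h.2⟩

lemma le_meanPayoff_of_isDiscountedValue [Fintype V] [F.NeBot] (hd : Tendsto d F (𝓝 1))
    (hd1 : ∀ n, d n < 1) (hg : ∀ v, Tendsto (fun n => g n v) F (𝓝 (μ v)))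
    (hsol : ∀ᶠ n in F, IsDiscountedValue mov P W (d n) (g n) σ) {x : ℕ → V}
    (hx : FollowsOn mov P σ x) : μ (x 0) ≤ meanPayoff W x := by
  have hmono := hx.monotone_comp fun v a ha => le_apply_mov_of_isDiscountedValue hd hg hsol ha
  refine le_liminf_runningAvg (fun _ => abs_apply_le_norm W _ _) fun ε hε => ?_
  obtain ⟨n, hn0, hsoln, hnear⟩ := exists_isDiscountedValue_near hd hg hsol hε
  refine ⟨2 * ‖g n‖ / (1 - d n), le_sum_of_discounted hn0 (hd1 n)
    (fun t => (Real.norm_eq_abs _).symm.trans_le (norm_le_pi_norm (g n) (x t))) (fun t => ?_)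
    (fun t => ?_)⟩
  · have h0t : μ (x 0) ≤ μ (x t) := hmono (Nat.zero_le t)
    linarith [(abs_lt.mp (hnear (x t))).1]
  · obtain ⟨a, ha, hxa⟩ := hx t
    rw [hxa]
    exact hsoln.1 _ a ha

lemma meanPayoff_le_of_isDiscountedValue [Fintype V] [F.NeBot] (hd : Tendsto d F (𝓝 1))
    (hd1 : ∀ n, d n < 1) (hg : ∀ v, Tendsto (fun n => g n v) F (𝓝 (μ v)))
    (hsol : ∀ᶠ n in F, IsDiscountedValue mov P W (d n) (g n) σ) {x : ℕ → V}
    (hx : FollowsOn mov (¬P ·) σ x) : meanPayoff W x ≤ μ (x 0) := by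
  have hmono := hx.monotone_comp (f := fun v => -μ v) fun v a ha =>
    neg_le_neg (apply_mov_le_of_isDiscountedValue hd hg hsol ha)
  refine liminf_runningAvg_le (fun _ => abs_apply_le_norm W _ _) fun ε hε => ?_
  obtain ⟨n, hn0, hsoln, hnear⟩ := exists_isDiscountedValue_near hd hg hsol hε
  refine ⟨2 * ‖g n‖ / (1 - d n), fun m => ?_⟩
  have key := le_sum_of_discounted (w := fun t => -W (x t) (x (t + 1)))
    (y := fun t => -g n (x t)) (c := -(μ (x 0) + ε)) hn0 (hd1 n)
    (fun t => by simpa using norm_le_pi_norm (g n) (x t)) (fun t => ?_) (fun t => ?_) m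
  · rw [sum_neg_distrib] at key
    linarith
  · have h0t : -μ (x 0) ≤ -μ (x t) := hmono (Nat.zero_le t)
    linarith [(abs_lt.mp (hnear (x t))).2]
  · obtain ⟨a, ha, hxa⟩ := hx t
    simp only [hxa]
    linarith [hsoln.2 _ a ha]

end VanishingDiscount

section Bellman

variable {V A : Type*} [Fintype A] [Nonempty A]

noncomputable def optValue (isMax : Prop) [Decidable isMax] (p : A → ℝ) : ℝ :=
  if isMax then univ.sup' univ_nonempty p else univ.inf' univ_nonempty p

variable {b : Prop} [Decidable b] {p q : A → ℝ}

lemma optValue_le_optValue_add {c : ℝ} (h : ∀ a, p a ≤ q a + c) :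
    optValue b p ≤ optValue b q + c := by
  unfold optValue
  split_ifs
  · exact sup'_le _ _ fun a _ => (h a).trans (by gcongr; exact le_sup' q (mem_univ a))
  · exact sub_le_iff_le_add.mp
      (le_inf' _ _ fun a _ => sub_le_iff_le_add.mpr ((inf'_le p (mem_univ a)).trans (h a)))

lemma exists_optValue_eq (b : Prop) [Decidable b] (p : A → ℝ) : ∃ a, optValue b p = p a := by
  unfold optValue
  split_ifs
  · obtain ⟨a, -, ha⟩ := exists_mem_eq_sup' univ_nonempty p
    exact ⟨a, ha⟩
  · obtain ⟨a, -, ha⟩ := exists_mem_eq_inf' univ_nonempty p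
    exact ⟨a, ha⟩

lemma le_optValue (hb : b) (a : A) : p a ≤ optValue b p := by
  rw [optValue, if_pos hb]
  exact le_sup' p (mem_univ a)

lemma optValue_le (hb : ¬b) (a : A) : optValue b p ≤ p a := by
  rw [optValue, if_neg hb]
  exact inf'_le p (mem_univ a)

variable (mov : V → A → V) (P : V → Prop) [DecidablePred P] (W : V → V → ℝ) (d : ℝ)

noncomputable def bellman (g : V → ℝ) : V → ℝ :=
  fun v => optValue (P v) fun a => (1 - d) * W v (mov v a) + d * g (mov v a)

variable [Fintype V]

lemma dist_bellman_le (hd : 0 ≤ d) (g g' : V → ℝ) :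
    dist (bellman mov P W d g) (bellman mov P W d g') ≤ d * dist g g' := by
  have step : ∀ (g g' : V → ℝ) v, bellman mov P W d g v ≤ bellman mov P W d g' v + d * dist g g' :=
    fun g g' v => optValue_le_optValue_add fun a => by
      have : g (mov v a) - g' (mov v a) ≤ dist g g' :=
        (le_abs_self _).trans ((Real.dist_eq _ _).symm.trans_le (dist_le_pi_dist g g' _))
      linarith [mul_le_mul_of_nonneg_left this hd]
  refine (dist_pi_le_iff (by positivity)).mpr fun v => ?_
  rw [Real.dist_eq, abs_sub_le_iff]
  have h' := step g' g v
  rw [dist_comm] at h'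
  constructor <;> linarith [step g g' v]

lemma norm_bellman_le (hd0 : 0 ≤ d) (hd1 : d ≤ 1) (g : V → ℝ) :
    ‖bellman mov P W d g‖ ≤ (1 - d) * ‖W‖ + d * ‖g‖ := by
  refine (pi_norm_le_iff_of_nonneg (by positivity)).mpr fun v => ?_
  obtain ⟨a, ha⟩ := exists_optValue_eq (P v) fun a => (1 - d) * W v (mov v a) + d * g (mov v a)
  rw [Real.norm_eq_abs, bellman, ha]
  have hW := abs_apply_le_norm W v (mov v a)
  have hg : |g (mov v a)| ≤ ‖g‖ := (Real.norm_eq_abs _).symm.trans_le (norm_le_pi_norm g _)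
  calc |(1 - d) * W v (mov v a) + d * g (mov v a)|
      ≤ |(1 - d) * W v (mov v a)| + |d * g (mov v a)| := abs_add_le _ _
    _ = (1 - d) * |W v (mov v a)| + d * |g (mov v a)| := by
      rw [abs_mul, abs_mul, abs_of_nonneg (sub_nonneg.mpr hd1), abs_of_nonneg hd0]
    _ ≤ (1 - d) * ‖W‖ + d * ‖g‖ := by gcongr

end Bellman

theorem exists_isDiscountedValue {V A : Type*} [Fintype V] [Fintype A] [Nonempty A]
    (mov : V → A → V) (P : V → Prop) (W : V → V → ℝ) {d : ℝ} (hd0 : 0 ≤ d) (hd1 : d < 1) :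
    ∃ (g : V → ℝ) (σ : V → A), ‖g‖ ≤ ‖W‖ ∧ IsDiscountedValue mov P W d g σ := by
  classical
  have hB : ContractingWith ⟨d, hd0⟩ (bellman mov P W d) :=
    ⟨by exact_mod_cast hd1, LipschitzWith.of_dist_le_mul (dist_bellman_le mov P W d hd0)⟩
  set g := hB.fixedPoint (bellman mov P W d)
  have hg : bellman mov P W d g = g := hB.fixedPoint_isFixedPt
  set q : V → A → ℝ := fun v a => (1 - d) * W v (mov v a) + d * g (mov v a)
  have hgv : ∀ v, g v = optValue (P v) (q v) := fun v => (congrFun hg v).symm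
  choose σ hσ using fun v => exists_optValue_eq (P v) (q v)
  refine ⟨g, σ, ?_, fun v a ha => ?_, fun v a ha => ?_⟩
  · have := norm_bellman_le mov P W d hd0 hd1.le g
    rw [hg] at this
    nlinarith
  · show g v ≤ q v a
    by_cases hv : P v
    · rw [ha hv, hgv v, hσ]
    · exact (hgv v).trans_le (optValue_le hv a)
  · show q v a ≤ g v
    by_cases hv : P v
    · exact (le_optValue hv a).trans_eq (hgv v).symm
    · rw [ha hv, hgv v, hσ]

theorem exists_optimal_positional_strategy {V A : Type*} [Fintype V] [Fintype A] [Nonempty A]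
    (mov : V → A → V) (P : V → Prop) (W : V → V → ℝ) :
    ∃ (μ : V → ℝ) (σ : V → A), (∀ v a, P v → μ (mov v a) ≤ μ v) ∧
      (∀ x, FollowsOn mov P σ x → μ (x 0) ≤ meanPayoff W x) ∧
      (∀ x, FollowsOn mov (¬P ·) σ x → meanPayoff W x ≤ μ (x 0)) := by
  set d : ℕ → ℝ := fun n => n / (n + 1)
  have hd0 : ∀ n, 0 ≤ d n := fun n => by positivity
  have hd1 : ∀ n, d n < 1 := fun n => (div_lt_one (by positivity)).mpr (lt_add_one _)
  choose g σ hgW hg using fun n => exists_isDiscountedValue mov P W (hd0 n) (hd1 n)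
  let U : Ultrafilter ℕ := Ultrafilter.of atTop
  have hd : Tendsto d U (𝓝 1) := (tendsto_natCast_div_add_atTop 1).mono_left (Ultrafilter.of_le _)
  obtain ⟨σ₀, hσ₀⟩ := (U.map σ).eq_pure_of_finite
  have hσ_eventually : ∀ᶠ n in (U : Filter ℕ), σ n = σ₀ :=
    Ultrafilter.mem_map.mp (show {σ₀} ∈ U.map σ by rw [hσ₀]; exact Ultrafilter.mem_pure.mpr rfl)
  have hsol : ∀ᶠ n in (U : Filter ℕ), IsDiscountedValue mov P W (d n) (g n) σ₀ :=
    hσ_eventually.mono fun n hn => hn ▸ hg n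
  obtain ⟨μ, -, hμ⟩ := (isCompact_closedBall (0 : V → ℝ) ‖W‖).ultrafilter_le_nhds (U.map g)
    (le_principal_iff.mpr (Ultrafilter.mem_map.mpr (univ_mem' fun n => by simpa using hgW n)))
  have hgμ : ∀ v, Tendsto (fun n => g n v) U (𝓝 (μ v)) := tendsto_pi_nhds.mp hμ
  exact ⟨μ, σ₀, fun v a hv => apply_mov_le_of_isDiscountedValue hd hgμ hsol (absurd hv),
    fun x => le_meanPayoff_of_isDiscountedValue hd hd1 hgμ hsol,
    fun x => meanPayoff_le_of_isDiscountedValue hd hd1 hgμ hsol⟩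

namespace AltGame

variable {k : ℕ} (G : AltGame k)

def act (π : G.PStrat) (n : ℕ) : G.A := π (G.owner (G.state π n)) (G.traj π n).2

lemma traj_succ (π : G.PStrat) (n : ℕ) :
    G.traj π (n + 1) = (G.mov (G.state π n) (G.act π n), (G.traj π n).2 ++ [G.act π n]) := rfl

lemma putil_eq_meanPayoff (i : Fin k) (π : G.PStrat) :
    G.putil i π = meanPayoff (fun u v => G.w u v i) (G.state π) := rfl

lemma traj_eq_of_forall_lt {π π' : G.PStrat} {n : ℕ}
    (h : ∀ t < n, π' (G.owner (G.state π t)) (G.traj π t).2 = G.act π t) :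
    ∀ t ≤ n, G.traj π' t = G.traj π t
  | 0, _ => rfl
  | t + 1, ht => by
    have ih := traj_eq_of_forall_lt h t (by omega)
    have hs : G.state π' t = G.state π t := congrArg Prod.fst ih
    have ha : G.act π' t = G.act π t := by rw [act, hs, ih, h t (by omega)]
    rw [traj_succ, traj_succ, hs, ha, ih]

variable [DecidableEq G.A] (σ : Fin k → G.V → G.A)

def monitorStep (p : G.V × Option (Fin k)) (a : G.A) : G.V × Option (Fin k) :=
  (G.mov p.1 a, p.2.or (if a = σ (G.owner p.1) p.1 then none else some (G.owner p.1)))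

def monitor (h : List G.A) : G.V × Option (Fin k) := h.foldl (G.monitorStep σ) (G.v0, none)

/-- Before any deviation the owner `j` of the current state plays `σ j`; once `j` has deviated,
everybody plays `σ j`, so the other players punish `j` with the minimizer's part of `σ j`. -/
def folk : G.PStrat :=
  fun _ h => σ ((G.monitor σ h).2.getD (G.owner (G.monitor σ h).1)) (G.monitor σ h).1

def blame (π : G.PStrat) (n : ℕ) : Option (Fin k) := (G.monitor σ (G.traj π n).2).2

lemma monitor_traj_succ (π : G.PStrat) (n : ℕ) :
    G.monitor σ (G.traj π (n + 1)).2
      = G.monitorStep σ (G.monitor σ (G.traj π n).2) (G.act π n) := by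
  simp [monitor, traj_succ]

lemma monitor_traj_fst (π : G.PStrat) (n : ℕ) : (G.monitor σ (G.traj π n).2).1 = G.state π n := by
  induction n with
  | zero => rfl
  | succ n ih => rw [monitor_traj_succ, monitorStep, ih]; rfl

lemma folk_apply_traj (j : Fin k) (π : G.PStrat) (n : ℕ) :
    G.folk σ j (G.traj π n).2
      = σ ((G.blame σ π n).getD (G.owner (G.state π n))) (G.state π n) := by
  rw [folk, blame, monitor_traj_fst]

lemma blame_succ (π : G.PStrat) (n : ℕ) :
    G.blame σ π (n + 1) = (G.blame σ π n).or
      (if G.act π n = σ (G.owner (G.state π n)) (G.state π n) then none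
        else some (G.owner (G.state π n))) := by
  rw [blame, monitor_traj_succ, monitorStep, monitor_traj_fst]; rfl

lemma blame_succ_eq_none_iff (π : G.PStrat) (n : ℕ) :
    G.blame σ π (n + 1) = none ↔
      G.blame σ π n = none ∧ G.act π n = σ (G.owner (G.state π n)) (G.state π n) := by
  rw [blame_succ, Option.or_eq_none_iff]
  split_ifs <;> simp_all

lemma blame_eq_none_of_le {π : G.PStrat} {n : ℕ} (h : G.blame σ π n = none) :
    ∀ t ≤ n, G.blame σ π t = none := by
  induction n with
  | zero => intro t ht; rwa [Nat.le_zero.mp ht]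
  | succ n ih =>
    intro t ht
    rcases Nat.lt_or_eq_of_le ht with ht | rfl
    · exact ih ((G.blame_succ_eq_none_iff σ π n).mp h).1 t (by omega)
    · exact h

lemma blame_eq_some_of_le {π : G.PStrat} {n : ℕ} {j : Fin k} (h : G.blame σ π n = some j) :
    ∀ t ≥ n, G.blame σ π t = some j := by
  intro t ht
  induction t, ht using Nat.le_induction with
  | base => exact h
  | succ t _ ih => rw [blame_succ, ih, Option.some_or]

lemma traj_eq_folk_of_blame_eq_none {π : G.PStrat} {n : ℕ} (h : G.blame σ π n = none) :
    ∀ t ≤ n, G.traj π t = G.traj (G.folk σ) t := by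
  refine fun t ht => (G.traj_eq_of_forall_lt (fun t ht => ?_) t ht).symm
  have hsucc := (G.blame_succ_eq_none_iff σ π t).mp (G.blame_eq_none_of_le σ h (t + 1) ht)
  rw [folk_apply_traj, hsucc.1, Option.getD_none, hsucc.2]

lemma blame_folk (n : ℕ) : G.blame σ (G.folk σ) n = none := by
  induction n with
  | zero => rfl
  | succ n ih =>
    refine (G.blame_succ_eq_none_iff σ _ n).mpr ⟨ih, ?_⟩
    rw [act, folk_apply_traj, ih, Option.getD_none]

lemma followsOn_folk (i : Fin k) (N : ℕ) :
    FollowsOn G.mov (G.owner · = i) (σ i) (fun t => G.state (G.folk σ) (N + t)) := fun t =>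
  ⟨G.act (G.folk σ) (N + t),
    fun hi => by rw [act, folk_apply_traj, blame_folk, Option.getD_none, hi], rfl⟩

lemma act_update_folk_of_ne {i : Fin k} {τ : List G.A → G.A} {n : ℕ}
    (h : G.owner (G.state (Function.update (G.folk σ) i τ) n) ≠ i) :
    G.act (Function.update (G.folk σ) i τ) n
      = σ ((G.blame σ (Function.update (G.folk σ) i τ) n).getD
          (G.owner (G.state (Function.update (G.folk σ) i τ) n)))
        (G.state (Function.update (G.folk σ) i τ) n) := by
  rw [act, Function.update_of_ne h, folk_apply_traj]

lemma exists_first_deviation {i : Fin k} {τ : List G.A → G.A}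
    (hdev : ∃ n, G.blame σ (Function.update (G.folk σ) i τ) n ≠ none) :
    ∃ N, G.state (Function.update (G.folk σ) i τ) N = G.state (G.folk σ) N ∧
      G.owner (G.state (Function.update (G.folk σ) i τ) N) = i ∧
      FollowsOn G.mov (G.owner · ≠ i) (σ i)
        (fun t => G.state (Function.update (G.folk σ) i τ) (N + 1 + t)) := by
  classical
  set π := Function.update (G.folk σ) i τ
  obtain ⟨N, hN⟩ : ∃ N, Nat.find hdev = N + 1 :=
    Nat.exists_eq_succ_of_ne_zero fun h0 => Nat.find_spec hdev (h0 ▸ rfl)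
  have hnone : G.blame σ π N = none := not_not.mp (Nat.find_min hdev (by omega))
  have hsome : G.blame σ π (N + 1) ≠ none := hN ▸ Nat.find_spec hdev
  have hleave : G.act π N ≠ σ (G.owner (G.state π N)) (G.state π N) := fun h =>
    hsome ((G.blame_succ_eq_none_iff σ π N).mpr ⟨hnone, h⟩)
  have hown : G.owner (G.state π N) = i := by
    by_contra hne
    apply hleave
    rw [G.act_update_folk_of_ne σ hne, hnone, Option.getD_none]
  have hblame : G.blame σ π (N + 1) = some i := by
    rw [blame_succ, hnone, Option.none_or, if_neg hleave, hown]
  refine ⟨N, congrArg Prod.fst (G.traj_eq_folk_of_blame_eq_none σ hnone N le_rfl), hown,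
    fun t => ⟨G.act π (N + 1 + t), fun hne => ?_, rfl⟩⟩
  rw [G.act_update_folk_of_ne σ hne, G.blame_eq_some_of_le σ hblame _ (by omega), Option.getD_some]

theorem isNash_folk [Fintype G.V] (μ : Fin k → G.V → ℝ)
    (hμ : ∀ i v a, G.owner v = i → μ i (G.mov v a) ≤ μ i v)
    (hlow : ∀ i x, FollowsOn G.mov (G.owner · = i) (σ i) x →
      μ i (x 0) ≤ meanPayoff (fun u v => G.w u v i) x)
    (hup : ∀ i x, FollowsOn G.mov (G.owner · ≠ i) (σ i) x →
      meanPayoff (fun u v => G.w u v i) x ≤ μ i (x 0)) :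
    G.PNash (G.folk σ) := by
  intro i τ
  set π := Function.update (G.folk σ) i τ
  by_cases hstay : ∀ n, G.blame σ π n = none
  · have hstate : G.state π = G.state (G.folk σ) := funext fun n =>
      congrArg Prod.fst (G.traj_eq_folk_of_blame_eq_none σ (hstay n) n le_rfl)
    rw [putil_eq_meanPayoff, putil_eq_meanPayoff, hstate]
  · obtain ⟨N, hstate, hown, hfollow⟩ := G.exists_first_deviation σ (not_forall.mp hstay)
    rw [putil_eq_meanPayoff, putil_eq_meanPayoff]
    calc _ = meanPayoff (fun u v => G.w u v i) (fun t => G.state π (N + 1 + t)) :=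
          (meanPayoff_comp_add _ _ _).symm
      _ ≤ μ i (G.state π (N + 1)) := hup i _ hfollow
      _ ≤ μ i (G.state π N) := hμ i _ _ hown
      _ = μ i (G.state (G.folk σ) N) := by rw [hstate]
      _ ≤ meanPayoff (fun u v => G.w u v i) (fun t => G.state (G.folk σ) (N + t)) :=
          hlow i _ (G.followsOn_folk σ i N)
      _ = _ := meanPayoff_comp_add _ _ _

end AltGame

theorem stmt17_general {k : ℕ} (G : AltGame k) [Fintype G.V] [Fintype G.A] [Nonempty G.A]
    (ν : Fin k → ℝ)
    (hmax : ∀ i : Fin k, ∃ s : List G.A → G.A,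
      ∀ σ : G.PStrat, ν i ≤ G.putil i (Function.update σ i s)) :
    ∃ σ : G.PStrat, G.PNash σ ∧ ∀ i : Fin k, ν i ≤ G.putil i σ := by
  classical
  choose μ σ hμ hlow hup using fun i : Fin k =>
    exists_optimal_positional_strategy G.mov (G.owner · = i) (fun u v => G.w u v i)
  have hNash := G.isNash_folk σ μ hμ hlow hup
  refine ⟨G.folk σ, hNash, fun i => ?_⟩
  obtain ⟨s, hs⟩ := hmax i
  exact (hs _).trans (hNash i s)

/-- Folk Theorem for `k`-player alternating move games: given for every player
`i` a zero-sum value `ν i`, an optimal strategy guaranteeing player `i` utility at least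
`ν i` against any behavior of the others, and a coalition punishment profile holding
player `i` to at most `ν i`, there is a (pure) Nash equilibrium in which every player `i`
receives utility at least `ν i`. -/
theorem stmt17 {k : ℕ} (G : AltGame k) [Fintype G.V] [Fintype G.A] [Nonempty G.A]
    (hbd : ∀ u v i, G.w u v i ∈ Set.Icc (-1 : ℝ) 1)
    (ν : Fin k → ℝ)
    (hmax : ∀ i : Fin k, ∃ s : List G.A → G.A,
      ∀ σ : G.PStrat, ν i ≤ G.putil i (Function.update σ i s))
    (hmin : ∀ i : Fin k, ∃ σ : G.PStrat,
      ∀ s : List G.A → G.A, G.putil i (Function.update σ i s) ≤ ν i) :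
    ∃ σ : G.PStrat, G.PNash σ ∧ ∀ i : Fin k, ν i ≤ G.putil i σ :=
  stmt17_general G ν hmax
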